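/- Suppose in the myopic process with n equal budget installments b/n, at each stage the previously selected parks are forced open and a new optimum is computed with cumulative budget. Then the stage-t optimal values f_1 ≥ f_2 ≥ ... ≥ f_n form a nonincreasing sequence, and f_n ≥ f_L, where f_L is the long-term optimal value with full budget b. -/
import Mathlib


/-- Myopic stagewise planning: the stage optimal values are nonincreasing,
and the final myopic value is at least the long-term optimal value. -/
theorem myopic_stage_monotone {ι : Type*} (Z : Set (Finset ι))
    (c g : Finset ι → ℝ) (hg : ∀ z, 0 ≤ g z)
    (n : ℕ) (hn : 1 ≤ n) (b : ℝ) (hb : 0 ≤ b)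
    (z : ℕ → Finset ι)
    (hstage : ∀ t < n, z (t + 1) ∈ Z ∧ z t ⊆ z (t + 1) ∧
      c (z (t + 1)) ≤ ((t : ℝ) + 1) * (b / n) ∧
      ∀ w ∈ Z, z t ⊆ w → c w ≤ ((t : ℝ) + 1) * (b / n) → g (z (t + 1)) ≤ g w)
    (zL : Finset ι)
    (hzL : zL ∈ Z ∧ c zL ≤ b ∧ ∀ w ∈ Z, c w ≤ b → g zL ≤ g w) :
    (∀ t, 1 ≤ t → t < n → g (z (t + 1)) ≤ g (z t)) ∧ g zL ≤ g (z n) := by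
  have hbn : (0 : ℝ) ≤ b / n := div_nonneg hb (Nat.cast_nonneg n)
  constructor
  · intro t ht htn
    obtain ⟨t', rfl⟩ : ∃ t', t = t' + 1 := ⟨t - 1, by omega⟩
    obtain ⟨hzt, _, hct, _⟩ := hstage t' (by omega)
    refine (hstage (t' + 1) htn).2.2.2 _ hzt subset_rfl (hct.trans ?_)
    have : ((t' : ℝ) + 1) ≤ ((t' + 1 : ℕ) : ℝ) + 1 := by push_cast; linarith
    exact mul_le_mul_of_nonneg_right this hbn
  · obtain ⟨m, rfl⟩ := Nat.exists_eq_succ_of_ne_zero (by omega : n ≠ 0)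
    obtain ⟨hzn, _, hcn, _⟩ := hstage m (by omega)
    refine hzL.2.2 _ hzn ?_
    have hne : ((m : ℝ) + 1) ≠ 0 := by positivity
    have : ((m : ℝ) + 1) * (b / ((m + 1 : ℕ) : ℝ)) = b := by
      push_cast; field_simp
    linarith [hcn, this.symm.le]
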